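/- Let k > 0, θ > 0, ρ ≥ 0, λ_I ≥ 0 and λ_O ≥ 0 be reals, and let H be a real random variable whose law has density f(x) = x^(k−1) · exp(−x/θ) / (Γ(k) θ^k) on (0, ∞). Then the ergodic capacity of the outdoor user satisfies E[log₂(1 + ρ·λ_O·H²/(ρ·λ_I·H² + 1))] ≤ log₂(1 + ρ·λ_O·M/(ρ·λ_I·M + 1)), where M = θ²·k·(k + 1). -/

import Mathlib

/-!
Write `g x = log₂ (1 + a x / (b x + 1))` with `a = ρ λ_O`, `b = ρ λ_I`. Applying `log y ≤ y - 1` to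
the ratio of the arguments of `g` at `x` and at `M` shows that `g` lies below its tangent line at
`M` on `[0, ∞)`, the gap being `a b (x - M)² / (((a + b) M + 1) (b M + 1) (b x + 1))`. Taking
`M = E[H²]` and integrating the tangent bound is Jensen's inequality. The density of `H` is the
Gamma density of rate `θ⁻¹`, and `x²` times the Gamma density of shape `k` and rate `r` is
`k (k + 1) / r²` times the Gamma density of shape `k + 2`, whence `E[H²] = θ² k (k + 1)`.
-/

open Real MeasureTheory ProbabilityTheory

theorem log_one_add_div_le_tangent {a b M x : ℝ} (ha : 0 ≤ a) (hb : 0 ≤ b) (hM : 0 ≤ M)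
    (hx : 0 ≤ x) :
    log (1 + a * x / (b * x + 1)) ≤
      log (1 + a * M / (b * M + 1)) + a / (((a + b) * M + 1) * (b * M + 1)) * (x - M) := by
  have hPx : 0 < 1 + a * x / (b * x + 1) := by positivity
  have hPM : 0 < 1 + a * M / (b * M + 1) := by positivity
  have hlog := log_le_sub_one_of_pos (div_pos hPx hPM)
  rw [log_div hPx.ne' hPM.ne'] at hlog
  have hratio : (1 + a * x / (b * x + 1)) / (1 + a * M / (b * M + 1)) - 1 =
      a / (((a + b) * M + 1) * (b * M + 1)) * (x - M) -
        a * b * (x - M) ^ 2 / (((a + b) * M + 1) * (b * M + 1) * (b * x + 1)) := by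
    field_simp
    ring
  have hgap : 0 ≤ a * b * (x - M) ^ 2 / (((a + b) * M + 1) * (b * M + 1) * (b * x + 1)) := by
    positivity
  linarith

theorem logb_one_add_div_le_tangent {a b M x : ℝ} (ha : 0 ≤ a) (hb : 0 ≤ b) (hM : 0 ≤ M)
    (hx : 0 ≤ x) :
    logb 2 (1 + a * x / (b * x + 1)) ≤
      logb 2 (1 + a * M / (b * M + 1)) +
        a / (((a + b) * M + 1) * (b * M + 1)) / log 2 * (x - M) := by
  rw [logb, logb, div_mul_eq_mul_div, ← add_div]
  gcongr
  exact log_one_add_div_le_tangent ha hb hM hx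

theorem integral_comp_le_of_le_tangent {α : Type*} [MeasurableSpace α] {μ : Measure α}
    [IsProbabilityMeasure μ] {X : α → ℝ} {g : ℝ → ℝ} {c : ℝ} (hX : Integrable X μ)
    (hgX : AEStronglyMeasurable (fun ω => g (X ω)) μ) (hg_nonneg : ∀ᵐ ω ∂μ, 0 ≤ g (X ω))
    (hg_le : ∀ᵐ ω ∂μ, g (X ω) ≤ g (∫ ω, X ω ∂μ) + c * (X ω - ∫ ω, X ω ∂μ)) :
    ∫ ω, g (X ω) ∂μ ≤ g (∫ ω, X ω ∂μ) := by
  have hslope : Integrable (fun ω => c * (X ω - ∫ ω, X ω ∂μ)) μ :=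
    (hX.sub (integrable_const _)).const_mul c
  have htangent : Integrable (fun ω => g (∫ ω, X ω ∂μ) + c * (X ω - ∫ ω, X ω ∂μ)) μ :=
    (integrable_const _).add hslope
  have hgi : Integrable (fun ω => g (X ω)) μ := by
    refine htangent.mono' hgX ?_
    filter_upwards [hg_nonneg, hg_le] with ω h0 h1
    rwa [norm_of_nonneg h0]
  calc ∫ ω, g (X ω) ∂μ ≤ ∫ ω, g (∫ ω, X ω ∂μ) + c * (X ω - ∫ ω, X ω ∂μ) ∂μ :=
        integral_mono_ae hgi htangent hg_le
    _ = g (∫ ω, X ω ∂μ) := by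
        rw [integral_add (integrable_const _) hslope, integral_const_mul,
          integral_sub hX (integrable_const _)]
        simp

namespace ProbabilityTheory

variable {a r : ℝ}

theorem gammaPDF_mul_sq (ha : 0 < a) (hr : 0 < r) (x : ℝ) :
    gammaPDF a r x * ENNReal.ofReal (x ^ 2) =
      ENNReal.ofReal (a * (a + 1) / r ^ 2) * gammaPDF (a + 2) r x := by
  rcases lt_or_ge x 0 with hx | hx
  · simp [gammaPDF_of_neg hx]
  rw [gammaPDF_of_nonneg hx, gammaPDF_of_nonneg hx, ← ENNReal.ofReal_mul (by positivity),
    ← ENNReal.ofReal_mul (by positivity)]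
  congr 1
  have hGamma : Gamma (a + 2) = (a + 1) * (a * Gamma a) := by
    rw [show a + 2 = a + 1 + 1 by ring, Gamma_add_one (by positivity), Gamma_add_one ha.ne']
  have hr_pow : r ^ (a + 2) = r ^ a * r ^ 2 := by exact_mod_cast rpow_add_natCast hr.ne' a 2
  have hx_pow : x ^ (a + 2 - 1) = x ^ (a - 1) * x ^ 2 := by
    rw [show a + 2 - 1 = a - 1 + (2 : ℕ) by push_cast; ring]
    exact_mod_cast rpow_add_natCast' hx (by push_cast; linarith)
  rw [hGamma, hr_pow, hx_pow]
  have hGamma_pos := Gamma_pos_of_pos ha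
  field_simp

theorem lintegral_sq_gammaMeasure (ha : 0 < a) (hr : 0 < r) :
    ∫⁻ x, ENNReal.ofReal (x ^ 2) ∂gammaMeasure a r = ENNReal.ofReal (a * (a + 1) / r ^ 2) := by
  have hpdf : Measurable (gammaPDF a r) := (measurable_gammaPDFReal a r).ennreal_ofReal
  rw [gammaMeasure, lintegral_withDensity_eq_lintegral_mul _ hpdf (by fun_prop)]
  simp only [Pi.mul_apply, gammaPDF_mul_sq ha hr]
  rw [lintegral_const_mul (f := gammaPDF (a + 2) r) _
      (measurable_gammaPDFReal _ r).ennreal_ofReal,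
    lintegral_gammaPDF_eq_one (by linarith) hr, mul_one]

theorem integrable_sq_gammaMeasure (ha : 0 < a) (hr : 0 < r) :
    Integrable (fun x => x ^ 2) (gammaMeasure a r) := by
  refine (lintegral_ofReal_ne_top_iff_integrable (by fun_prop)
    (ae_of_all _ fun x => sq_nonneg x)).mp ?_
  rw [lintegral_sq_gammaMeasure ha hr]
  exact ENNReal.ofReal_ne_top

theorem integral_sq_gammaMeasure (ha : 0 < a) (hr : 0 < r) :
    ∫ x, x ^ 2 ∂gammaMeasure a r = a * (a + 1) / r ^ 2 := by
  rw [integral_eq_lintegral_of_nonneg_ae (ae_of_all _ fun x => sq_nonneg x) (by fun_prop),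
    lintegral_sq_gammaMeasure ha hr, ENNReal.toReal_ofReal (by positivity)]

end ProbabilityTheory

-- The scale form of the Gamma density differs from `gammaPDF` only at `x = 0`.
theorem withDensity_gammaScalePDF_eq_gammaMeasure {k θ : ℝ} (hθ : 0 < θ) :
    volume.withDensity (fun x => ENNReal.ofReal
      (if 0 < x then x ^ (k - 1) * exp (-x / θ) / (Gamma k * θ ^ k) else 0)) =
      gammaMeasure k θ⁻¹ := by
  refine withDensity_congr_ae ?_
  filter_upwards [Measure.ae_ne volume 0] with x hx
  rcases hx.lt_or_gt with hneg | hpos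
  · rw [gammaPDF_of_neg hneg, if_neg hneg.not_gt, ENNReal.ofReal_zero]
  · rw [gammaPDF_of_nonneg hpos.le, if_pos hpos, inv_rpow hθ.le]
    congr 1
    ring_nf

/-- If the channel magnitude `H` is Gamma-distributed with shape `k` and scale `θ`, then the
outdoor-user ergodic capacity satisfies
`E[log₂(1 + ρ·λ_O·H²/(ρ·λ_I·H² + 1))] ≤ log₂(1 + ρ·λ_O·M/(ρ·λ_I·M + 1))`
with `M = θ²·k·(k+1)` the Gamma second moment. -/
theorem outdoor_ergodic_capacity_bound (k θ ρ lamI lamO : ℝ)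
    (hk : 0 < k) (hθ : 0 < θ) (hρ : 0 ≤ ρ) (hI : 0 ≤ lamI) (hO : 0 ≤ lamO)
    {Ω : Type*} [MeasurableSpace Ω] (P : Measure Ω) [IsProbabilityMeasure P]
    (H : Ω → ℝ) (hH : Measurable H)
    (hlaw : P.map H = volume.withDensity (fun x =>
      ENNReal.ofReal (if 0 < x then x ^ (k - 1) * Real.exp (-x / θ) / (Real.Gamma k * θ ^ k)
        else 0))) :
    ∫ ω, Real.logb 2 (1 + ρ * lamO * (H ω) ^ 2 / (ρ * lamI * (H ω) ^ 2 + 1)) ∂P ≤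
      Real.logb 2 (1 + ρ * lamO * (θ ^ 2 * (k * (k + 1))) /
        (ρ * lamI * (θ ^ 2 * (k * (k + 1))) + 1)) := by
  rw [withDensity_gammaScalePDF_eq_gammaMeasure hθ] at hlaw
  have hr : 0 < θ⁻¹ := inv_pos.mpr hθ
  have hX : Integrable (fun ω => H ω ^ 2) P := by
    have := integrable_sq_gammaMeasure hk hr
    rw [← hlaw] at this
    exact this.comp_measurable hH
  have hmean : ∫ ω, H ω ^ 2 ∂P = θ ^ 2 * (k * (k + 1)) := by
    rw [← integral_map (f := fun x => x ^ 2) hH.aemeasurable (by fun_prop), hlaw,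
      integral_sq_gammaMeasure hk hr]
    field_simp
  have hnonneg : ∀ ω, 0 ≤ logb 2 (1 + ρ * lamO * H ω ^ 2 / (ρ * lamI * H ω ^ 2 + 1)) :=
    fun ω => logb_nonneg one_lt_two (le_add_of_nonneg_right (by positivity))
  rw [← hmean]
  exact integral_comp_le_of_le_tangent
    (g := fun x => logb 2 (1 + ρ * lamO * x / (ρ * lamI * x + 1))) hX
    (Measurable.aestronglyMeasurable (by unfold logb; fun_prop)) (ae_of_all _ hnonneg)
    (ae_of_all _ fun ω => logb_one_add_div_le_tangent (mul_nonneg hρ hO) (mul_nonneg hρ hI)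
      (integral_nonneg fun ω => sq_nonneg (H ω)) (sq_nonneg (H ω)))
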